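/- Let G be a hole-free and paraglider-free graph and A an induced subgraph of G isomorphic to the complement of C6. Let x, y be adjacent vertices outside A such that x has exactly one neighbor in A and y has exactly two or exactly three neighbors in A. Then N_A(x) and N_A(y) are comparable under inclusion, i.e., N_A(x) ⊆ N_A(y). -/
import Mathlib


open SimpleGraph

/-- `H` occurs as an induced subgraph of `G`. -/
def HasInducedCopy {V W : Type} (G : SimpleGraph V) (H : SimpleGraph W) : Prop :=
  Nonempty (H ↪g G)

/-- `G` has no induced chordless cycle with at least 5 vertices. -/
def HoleFree {V : Type} (G : SimpleGraph V) : Prop :=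
  ∀ n : ℕ, 5 ≤ n → ¬ HasInducedCopy G (cycleGraph n)

/-- the disjoint union of a `P₂` and a `P₃`. -/
def p2p3 : SimpleGraph (Fin 5) :=
  SimpleGraph.fromRel (fun i j => (i, j) ∈ ([(0,1),(2,3),(3,4)] : List (Fin 5 × Fin 5)))

/-- the paraglider: a diamond on `0,1,2,3` (missing edge `2-3`) plus vertex `4` seeing `2,3`. -/
def paraglider : SimpleGraph (Fin 5) :=
  SimpleGraph.fromRel
    (fun i j => (i, j) ∈ ([(0,1),(0,2),(0,3),(1,2),(1,3),(4,2),(4,3)] : List (Fin 5 × Fin 5)))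

/-- the diamond `K₄ - e`. -/
def diamond : SimpleGraph (Fin 4) :=
  SimpleGraph.fromRel
    (fun i j => (i, j) ∈ ([(0,1),(0,2),(0,3),(1,2),(1,3)] : List (Fin 4 × Fin 4)))

/-- three independent edges. -/
def threeK2 : SimpleGraph (Fin 6) :=
  SimpleGraph.fromRel (fun i j => (i, j) ∈ ([(0,1),(2,3),(4,5)] : List (Fin 6 × Fin 6)))

/-- the matched co-bipartite graph: two cliques of size `k` joined by a perfect matching. -/
def matchedCoBip (k : ℕ) : SimpleGraph (Fin k ⊕ Fin k) :=
  SimpleGraph.fromRel (fun x y =>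
    (∃ i j, x = Sum.inl i ∧ y = Sum.inl j) ∨ (∃ i j, x = Sum.inr i ∧ y = Sum.inr j) ∨
    (∃ i, x = Sum.inl i ∧ y = Sum.inr i))

/-- `G` has no induced hole and no induced antihole. -/
def WeaklyChordal {V : Type} (G : SimpleGraph V) : Prop :=
  ∀ n : ℕ, 5 ≤ n →
    ¬ HasInducedCopy G (cycleGraph n) ∧ ¬ HasInducedCopy G (cycleGraph n)ᶜ

/-- a clique `K` whose removal disconnects the graph. -/
def HasCliqueSeparator {V : Type} (G : SimpleGraph V) : Prop :=
  ∃ K : Set V, G.IsClique K ∧ ¬ (G.induce Kᶜ).Preconnected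

/-- an atom: a connected graph with no clique separator. -/
def IsAtomGraph {V : Type} (G : SimpleGraph V) : Prop :=
  G.Connected ∧ ¬ HasCliqueSeparator G

instance fromRel.decidableRel {α : Type} (r : α → α → Prop) [DecidableEq α] [DecidableRel r] :
    DecidableRel (SimpleGraph.fromRel r).Adj :=
  fun v w => decidable_of_iff _ (SimpleGraph.fromRel_adj r v w).symm

instance : DecidableRel paraglider.Adj := by unfold paraglider; infer_instance

/-- helper to build a graph embedding from a map with the right properties. -/
def mkEmb {V : Type} {n : ℕ} (G : SimpleGraph V) (P : SimpleGraph (Fin n)) (g : Fin n → V)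
    (hinj : Function.Injective g) (hadj : ∀ i j, G.Adj (g i) (g j) ↔ P.Adj i j) : P ↪g G :=
  ⟨⟨g, hinj⟩, hadj _ _⟩

/-- model graph on 8 vertices: `0..5` a copy of `(C6)ᶜ`, `6 = x` (adjacent to `0` and `7`),
`7 = y` (adjacent to the `b`-set and to `6`). -/
def Hb (b : ℕ → Bool) : SimpleGraph (Fin 8) :=
  SimpleGraph.fromRel fun u v =>
    (u.val < 6 ∧ v.val < 6 ∧ ((v.val + 6 - u.val) % 6 = 2 ∨ (v.val + 6 - u.val) % 6 = 3 ∨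
      (v.val + 6 - u.val) % 6 = 4))
    ∨ (u.val = 6 ∧ v.val = 7) ∨ (u.val = 6 ∧ v.val = 0) ∨ (u.val = 7 ∧ v.val < 6 ∧ b v.val = true)

instance (b : ℕ → Bool) : DecidableRel (Hb b).Adj := by unfold Hb; infer_instance

def gmap {V : Type} (f : Fin 6 → V) (x y : V) : Fin 8 → V :=
  fun u => if h : u.val < 6 then f ⟨u.val, h⟩ else if u.val = 6 then x else y

set_option maxHeartbeats 4000000 in
/-- the configuration `A ∪ {x, y}` realizes the model graph `Hb b`. -/
noncomputable def embH {V : Type} (G : SimpleGraph V) (f : (cycleGraph 6)ᶜ ↪g G) (x y : V)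
    (hx : x ∉ Set.range ⇑f) (hy : y ∉ Set.range ⇑f) (hxy : G.Adj x y)
    (hx0 : G.Adj x (f 0)) (hxo : ∀ j, G.Adj x (f j) → j = 0)
    (b : ℕ → Bool) (hb : ∀ i : Fin 6, b i.val = true ↔ G.Adj y (f i)) :
    Hb b ↪g G := by
  have hfx : ∀ i : Fin 6, ¬ f i = x := fun i h => hx ⟨i, h⟩
  have hfy : ∀ i : Fin 6, ¬ f i = y := fun i h => hy ⟨i, h⟩
  have hxf : ∀ i : Fin 6, ¬ x = f i := fun i h => hfx i h.symm
  have hyf : ∀ i : Fin 6, ¬ y = f i := fun i h => hfy i h.symm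
  have hxn : ∀ j : Fin 6, ¬ j = 0 → ¬ G.Adj x (f j) := fun j hj h => hj (hxo j h)
  have hnx : ∀ j : Fin 6, ¬ j = 0 → ¬ G.Adj (f j) x := fun j hj h => hxn j hj h.symm
  have hby : ∀ i : Fin 6, G.Adj (f i) y ↔ b i.val = true := fun i => (adj_comm ..).trans (hb i).symm
  have hyb : ∀ i : Fin 6, G.Adj y (f i) ↔ b i.val = true := fun i => (hb i).symm
  refine mkEmb G (Hb b) (gmap ⇑f x y) ?_ ?_
  · intro u v huv
    fin_cases u <;> fin_cases v <;>
      first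
        | rfl
        | exact absurd (f.injective huv) (by decide)
        | exact absurd huv (hfx _) | exact absurd huv (hfy _)
        | exact absurd huv (hxf _) | exact absurd huv (hyf _)
        | exact absurd huv hxy.ne | exact absurd huv hxy.ne'
  · intro u v
    fin_cases u <;> fin_cases v <;>
      simp (config := { decide := true }) [gmap, Hb, fromRel_adj, Embedding.map_adj_iff,
        hxy, hxy.symm, hx0, hx0.symm, hxn, hnx, hby, hyb] <;> rfl

set_option maxHeartbeats 4000000 in
/-- main combinatorial step, normalized so that the unique neighbor of `x` in `A` is `f 0`. -/
lemma aux_adj {V : Type} (G : SimpleGraph V) (hHole : HoleFree G)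
    (hPara : ¬ HasInducedCopy G paraglider) (f : (cycleGraph 6)ᶜ ↪g G) (x y : V)
    (hx : x ∉ Set.range ⇑f) (hy : y ∉ Set.range ⇑f) (hxy : G.Adj x y)
    (hx0 : G.Adj x (f 0)) (hxo : ∀ j, G.Adj x (f j) → j = 0)
    (h23 : {i : Fin 6 | G.Adj y (f i)}.ncard = 2 ∨ {i : Fin 6 | G.Adj y (f i)}.ncard = 3) :
    G.Adj y (f 0) := by
  by_contra hy0
  by_cases h1 : G.Adj y (f 1) <;> by_cases h2 : G.Adj y (f 2) <;> by_cases h3 : G.Adj y (f 3) <;>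
    by_cases h4 : G.Adj y (f 4) <;> by_cases h5 : G.Adj y (f 5)
  · have hS : {i : Fin 6 | G.Adj y (f i)} = ↑({1,2,3,4,5} : Finset (Fin 6)) := by
      ext i
      have hi6 : i = 0 ∨ i = 1 ∨ i = 2 ∨ i = 3 ∨ i = 4 ∨ i = 5 := by omega
      rcases hi6 with rfl | rfl | rfl | rfl | rfl | rfl <;>
        simp (config := { decide := true }) [hy0, h1, h2, h3, h4, h5]
    rw [hS, Set.ncard_coe_finset] at h23
    revert h23; decide
  · have hS : {i : Fin 6 | G.Adj y (f i)} = ↑({1,2,3,4} : Finset (Fin 6)) := by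
      ext i
      have hi6 : i = 0 ∨ i = 1 ∨ i = 2 ∨ i = 3 ∨ i = 4 ∨ i = 5 := by omega
      rcases hi6 with rfl | rfl | rfl | rfl | rfl | rfl <;>
        simp (config := { decide := true }) [hy0, h1, h2, h3, h4, h5]
    rw [hS, Set.ncard_coe_finset] at h23
    revert h23; decide
  · have hS : {i : Fin 6 | G.Adj y (f i)} = ↑({1,2,3,5} : Finset (Fin 6)) := by
      ext i
      have hi6 : i = 0 ∨ i = 1 ∨ i = 2 ∨ i = 3 ∨ i = 4 ∨ i = 5 := by omega
      rcases hi6 with rfl | rfl | rfl | rfl | rfl | rfl <;>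
        simp (config := { decide := true }) [hy0, h1, h2, h3, h4, h5]
    rw [hS, Set.ncard_coe_finset] at h23
    revert h23; decide
  · exact hHole 5 (by norm_num)
      ⟨Embedding.comp
      (embH G f x y hx hy hxy hx0 hxo (fun n : ℕ => decide (n ∈ [1,2,3]))
      (by
        intro i
        have hi6 : i = 0 ∨ i = 1 ∨ i = 2 ∨ i = 3 ∨ i = 4 ∨ i = 5 := by omega
        rcases hi6 with rfl | rfl | rfl | rfl | rfl | rfl <;>
          simp (config := { decide := true }) [hy0, h1, h2, h3, h4, h5]))
      (mkEmb (Hb (fun n : ℕ => decide (n ∈ [1,2,3]))) (cycleGraph 5) ![0,4,1,7,6]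
        (by decide) (fun i j => by revert i j; decide))⟩
  · have hS : {i : Fin 6 | G.Adj y (f i)} = ↑({1,2,4,5} : Finset (Fin 6)) := by
      ext i
      have hi6 : i = 0 ∨ i = 1 ∨ i = 2 ∨ i = 3 ∨ i = 4 ∨ i = 5 := by omega
      rcases hi6 with rfl | rfl | rfl | rfl | rfl | rfl <;>
        simp (config := { decide := true }) [hy0, h1, h2, h3, h4, h5]
    rw [hS, Set.ncard_coe_finset] at h23
    revert h23; decide
  · exact hHole 5 (by norm_num)
      ⟨Embedding.comp
      (embH G f x y hx hy hxy hx0 hxo (fun n : ℕ => decide (n ∈ [1,2,4]))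
      (by
        intro i
        have hi6 : i = 0 ∨ i = 1 ∨ i = 2 ∨ i = 3 ∨ i = 4 ∨ i = 5 := by omega
        rcases hi6 with rfl | rfl | rfl | rfl | rfl | rfl <;>
          simp (config := { decide := true }) [hy0, h1, h2, h3, h4, h5]))
      (mkEmb (Hb (fun n : ℕ => decide (n ∈ [1,2,4]))) (cycleGraph 5) ![0,2,7,1,3]
        (by decide) (fun i j => by revert i j; decide))⟩
  · exact hHole 5 (by norm_num)
      ⟨Embedding.comp
      (embH G f x y hx hy hxy hx0 hxo (fun n : ℕ => decide (n ∈ [1,2,5]))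
      (by
        intro i
        have hi6 : i = 0 ∨ i = 1 ∨ i = 2 ∨ i = 3 ∨ i = 4 ∨ i = 5 := by omega
        rcases hi6 with rfl | rfl | rfl | rfl | rfl | rfl <;>
          simp (config := { decide := true }) [hy0, h1, h2, h3, h4, h5]))
      (mkEmb (Hb (fun n : ℕ => decide (n ∈ [1,2,5]))) (cycleGraph 5) ![0,2,7,1,3]
        (by decide) (fun i j => by revert i j; decide))⟩
  · exact hHole 5 (by norm_num)
      ⟨Embedding.comp
      (embH G f x y hx hy hxy hx0 hxo (fun n : ℕ => decide (n ∈ [1,2]))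
      (by
        intro i
        have hi6 : i = 0 ∨ i = 1 ∨ i = 2 ∨ i = 3 ∨ i = 4 ∨ i = 5 := by omega
        rcases hi6 with rfl | rfl | rfl | rfl | rfl | rfl <;>
          simp (config := { decide := true }) [hy0, h1, h2, h3, h4, h5]))
      (mkEmb (Hb (fun n : ℕ => decide (n ∈ [1,2]))) (cycleGraph 5) ![0,2,7,1,3]
        (by decide) (fun i j => by revert i j; decide))⟩
  · have hS : {i : Fin 6 | G.Adj y (f i)} = ↑({1,3,4,5} : Finset (Fin 6)) := by
      ext i
      have hi6 : i = 0 ∨ i = 1 ∨ i = 2 ∨ i = 3 ∨ i = 4 ∨ i = 5 := by omega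
      rcases hi6 with rfl | rfl | rfl | rfl | rfl | rfl <;>
        simp (config := { decide := true }) [hy0, h1, h2, h3, h4, h5]
    rw [hS, Set.ncard_coe_finset] at h23
    revert h23; decide
  · exact hHole 5 (by norm_num)
      ⟨Embedding.comp
      (embH G f x y hx hy hxy hx0 hxo (fun n : ℕ => decide (n ∈ [1,3,4]))
      (by
        intro i
        have hi6 : i = 0 ∨ i = 1 ∨ i = 2 ∨ i = 3 ∨ i = 4 ∨ i = 5 := by omega
        rcases hi6 with rfl | rfl | rfl | rfl | rfl | rfl <;>
          simp (config := { decide := true }) [hy0, h1, h2, h3, h4, h5]))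
      (mkEmb (Hb (fun n : ℕ => decide (n ∈ [1,3,4]))) (cycleGraph 5) ![2,4,7,3,5]
        (by decide) (fun i j => by revert i j; decide))⟩
  · exact hHole 5 (by norm_num)
      ⟨Embedding.comp
      (embH G f x y hx hy hxy hx0 hxo (fun n : ℕ => decide (n ∈ [1,3,5]))
      (by
        intro i
        have hi6 : i = 0 ∨ i = 1 ∨ i = 2 ∨ i = 3 ∨ i = 4 ∨ i = 5 := by omega
        rcases hi6 with rfl | rfl | rfl | rfl | rfl | rfl <;>
          simp (config := { decide := true }) [hy0, h1, h2, h3, h4, h5]))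
      (mkEmb (Hb (fun n : ℕ => decide (n ∈ [1,3,5]))) (cycleGraph 5) ![0,2,5,7,6]
        (by decide) (fun i j => by revert i j; decide))⟩
  · exact hHole 5 (by norm_num)
      ⟨Embedding.comp
      (embH G f x y hx hy hxy hx0 hxo (fun n : ℕ => decide (n ∈ [1,3]))
      (by
        intro i
        have hi6 : i = 0 ∨ i = 1 ∨ i = 2 ∨ i = 3 ∨ i = 4 ∨ i = 5 := by omega
        rcases hi6 with rfl | rfl | rfl | rfl | rfl | rfl <;>
          simp (config := { decide := true }) [hy0, h1, h2, h3, h4, h5]))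
      (mkEmb (Hb (fun n : ℕ => decide (n ∈ [1,3]))) (cycleGraph 5) ![0,4,1,7,6]
        (by decide) (fun i j => by revert i j; decide))⟩
  · exact hHole 5 (by norm_num)
      ⟨Embedding.comp
      (embH G f x y hx hy hxy hx0 hxo (fun n : ℕ => decide (n ∈ [1,4,5]))
      (by
        intro i
        have hi6 : i = 0 ∨ i = 1 ∨ i = 2 ∨ i = 3 ∨ i = 4 ∨ i = 5 := by omega
        rcases hi6 with rfl | rfl | rfl | rfl | rfl | rfl <;>
          simp (config := { decide := true }) [hy0, h1, h2, h3, h4, h5]))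
      (mkEmb (Hb (fun n : ℕ => decide (n ∈ [1,4,5]))) (cycleGraph 5) ![0,2,5,7,6]
        (by decide) (fun i j => by revert i j; decide))⟩
  · exact hHole 5 (by norm_num)
      ⟨Embedding.comp
      (embH G f x y hx hy hxy hx0 hxo (fun n : ℕ => decide (n ∈ [1,4]))
      (by
        intro i
        have hi6 : i = 0 ∨ i = 1 ∨ i = 2 ∨ i = 3 ∨ i = 4 ∨ i = 5 := by omega
        rcases hi6 with rfl | rfl | rfl | rfl | rfl | rfl <;>
          simp (config := { decide := true }) [hy0, h1, h2, h3, h4, h5]))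
      (mkEmb (Hb (fun n : ℕ => decide (n ∈ [1,4]))) (cycleGraph 5) ![0,3,1,7,6]
        (by decide) (fun i j => by revert i j; decide))⟩
  · exact hHole 5 (by norm_num)
      ⟨Embedding.comp
      (embH G f x y hx hy hxy hx0 hxo (fun n : ℕ => decide (n ∈ [1,5]))
      (by
        intro i
        have hi6 : i = 0 ∨ i = 1 ∨ i = 2 ∨ i = 3 ∨ i = 4 ∨ i = 5 := by omega
        rcases hi6 with rfl | rfl | rfl | rfl | rfl | rfl <;>
          simp (config := { decide := true }) [hy0, h1, h2, h3, h4, h5]))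
      (mkEmb (Hb (fun n : ℕ => decide (n ∈ [1,5]))) (cycleGraph 5) ![0,2,5,7,6]
        (by decide) (fun i j => by revert i j; decide))⟩
  · have hS : {i : Fin 6 | G.Adj y (f i)} = ↑({1} : Finset (Fin 6)) := by
      ext i
      have hi6 : i = 0 ∨ i = 1 ∨ i = 2 ∨ i = 3 ∨ i = 4 ∨ i = 5 := by omega
      rcases hi6 with rfl | rfl | rfl | rfl | rfl | rfl <;>
        simp (config := { decide := true }) [hy0, h1, h2, h3, h4, h5]
    rw [hS, Set.ncard_coe_finset] at h23
    revert h23; decide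
  · have hS : {i : Fin 6 | G.Adj y (f i)} = ↑({2,3,4,5} : Finset (Fin 6)) := by
      ext i
      have hi6 : i = 0 ∨ i = 1 ∨ i = 2 ∨ i = 3 ∨ i = 4 ∨ i = 5 := by omega
      rcases hi6 with rfl | rfl | rfl | rfl | rfl | rfl <;>
        simp (config := { decide := true }) [hy0, h1, h2, h3, h4, h5]
    rw [hS, Set.ncard_coe_finset] at h23
    revert h23; decide
  · exact hPara
      ⟨Embedding.comp
      (embH G f x y hx hy hxy hx0 hxo (fun n : ℕ => decide (n ∈ [2,3,4]))
      (by
        intro i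
        have hi6 : i = 0 ∨ i = 1 ∨ i = 2 ∨ i = 3 ∨ i = 4 ∨ i = 5 := by omega
        rcases hi6 with rfl | rfl | rfl | rfl | rfl | rfl <;>
          simp (config := { decide := true }) [hy0, h1, h2, h3, h4, h5]))
      (mkEmb (Hb (fun n : ℕ => decide (n ∈ [2,3,4]))) paraglider ![2,4,0,7,3]
        (by decide) (fun i j => by revert i j; decide))⟩
  · exact hHole 5 (by norm_num)
      ⟨Embedding.comp
      (embH G f x y hx hy hxy hx0 hxo (fun n : ℕ => decide (n ∈ [2,3,5]))
      (by
        intro i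
        have hi6 : i = 0 ∨ i = 1 ∨ i = 2 ∨ i = 3 ∨ i = 4 ∨ i = 5 := by omega
        rcases hi6 with rfl | rfl | rfl | rfl | rfl | rfl <;>
          simp (config := { decide := true }) [hy0, h1, h2, h3, h4, h5]))
      (mkEmb (Hb (fun n : ℕ => decide (n ∈ [2,3,5]))) (cycleGraph 5) ![1,3,7,2,4]
        (by decide) (fun i j => by revert i j; decide))⟩
  · exact hHole 5 (by norm_num)
      ⟨Embedding.comp
      (embH G f x y hx hy hxy hx0 hxo (fun n : ℕ => decide (n ∈ [2,3]))
      (by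
        intro i
        have hi6 : i = 0 ∨ i = 1 ∨ i = 2 ∨ i = 3 ∨ i = 4 ∨ i = 5 := by omega
        rcases hi6 with rfl | rfl | rfl | rfl | rfl | rfl <;>
          simp (config := { decide := true }) [hy0, h1, h2, h3, h4, h5]))
      (mkEmb (Hb (fun n : ℕ => decide (n ∈ [2,3]))) (cycleGraph 5) ![1,3,7,2,4]
        (by decide) (fun i j => by revert i j; decide))⟩
  · exact hHole 5 (by norm_num)
      ⟨Embedding.comp
      (embH G f x y hx hy hxy hx0 hxo (fun n : ℕ => decide (n ∈ [2,4,5]))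
      (by
        intro i
        have hi6 : i = 0 ∨ i = 1 ∨ i = 2 ∨ i = 3 ∨ i = 4 ∨ i = 5 := by omega
        rcases hi6 with rfl | rfl | rfl | rfl | rfl | rfl <;>
          simp (config := { decide := true }) [hy0, h1, h2, h3, h4, h5]))
      (mkEmb (Hb (fun n : ℕ => decide (n ∈ [2,4,5]))) (cycleGraph 5) ![0,3,5,7,4]
        (by decide) (fun i j => by revert i j; decide))⟩
  · exact hPara
      ⟨Embedding.comp
      (embH G f x y hx hy hxy hx0 hxo (fun n : ℕ => decide (n ∈ [2,4]))
      (by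
        intro i
        have hi6 : i = 0 ∨ i = 1 ∨ i = 2 ∨ i = 3 ∨ i = 4 ∨ i = 5 := by omega
        rcases hi6 with rfl | rfl | rfl | rfl | rfl | rfl <;>
          simp (config := { decide := true }) [hy0, h1, h2, h3, h4, h5]))
      (mkEmb (Hb (fun n : ℕ => decide (n ∈ [2,4]))) paraglider ![2,4,0,7,6]
        (by decide) (fun i j => by revert i j; decide))⟩
  · exact hHole 5 (by norm_num)
      ⟨Embedding.comp
      (embH G f x y hx hy hxy hx0 hxo (fun n : ℕ => decide (n ∈ [2,5]))
      (by
        intro i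
        have hi6 : i = 0 ∨ i = 1 ∨ i = 2 ∨ i = 3 ∨ i = 4 ∨ i = 5 := by omega
        rcases hi6 with rfl | rfl | rfl | rfl | rfl | rfl <;>
          simp (config := { decide := true }) [hy0, h1, h2, h3, h4, h5]))
      (mkEmb (Hb (fun n : ℕ => decide (n ∈ [2,5]))) (cycleGraph 5) ![0,3,5,7,6]
        (by decide) (fun i j => by revert i j; decide))⟩
  · have hS : {i : Fin 6 | G.Adj y (f i)} = ↑({2} : Finset (Fin 6)) := by
      ext i
      have hi6 : i = 0 ∨ i = 1 ∨ i = 2 ∨ i = 3 ∨ i = 4 ∨ i = 5 := by omega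
      rcases hi6 with rfl | rfl | rfl | rfl | rfl | rfl <;>
        simp (config := { decide := true }) [hy0, h1, h2, h3, h4, h5]
    rw [hS, Set.ncard_coe_finset] at h23
    revert h23; decide
  · exact hHole 5 (by norm_num)
      ⟨Embedding.comp
      (embH G f x y hx hy hxy hx0 hxo (fun n : ℕ => decide (n ∈ [3,4,5]))
      (by
        intro i
        have hi6 : i = 0 ∨ i = 1 ∨ i = 2 ∨ i = 3 ∨ i = 4 ∨ i = 5 := by omega
        rcases hi6 with rfl | rfl | rfl | rfl | rfl | rfl <;>
          simp (config := { decide := true }) [hy0, h1, h2, h3, h4, h5]))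
      (mkEmb (Hb (fun n : ℕ => decide (n ∈ [3,4,5]))) (cycleGraph 5) ![0,2,5,7,6]
        (by decide) (fun i j => by revert i j; decide))⟩
  · exact hHole 5 (by norm_num)
      ⟨Embedding.comp
      (embH G f x y hx hy hxy hx0 hxo (fun n : ℕ => decide (n ∈ [3,4]))
      (by
        intro i
        have hi6 : i = 0 ∨ i = 1 ∨ i = 2 ∨ i = 3 ∨ i = 4 ∨ i = 5 := by omega
        rcases hi6 with rfl | rfl | rfl | rfl | rfl | rfl <;>
          simp (config := { decide := true }) [hy0, h1, h2, h3, h4, h5]))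
      (mkEmb (Hb (fun n : ℕ => decide (n ∈ [3,4]))) (cycleGraph 5) ![2,4,7,3,5]
        (by decide) (fun i j => by revert i j; decide))⟩
  · exact hHole 5 (by norm_num)
      ⟨Embedding.comp
      (embH G f x y hx hy hxy hx0 hxo (fun n : ℕ => decide (n ∈ [3,5]))
      (by
        intro i
        have hi6 : i = 0 ∨ i = 1 ∨ i = 2 ∨ i = 3 ∨ i = 4 ∨ i = 5 := by omega
        rcases hi6 with rfl | rfl | rfl | rfl | rfl | rfl <;>
          simp (config := { decide := true }) [hy0, h1, h2, h3, h4, h5]))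
      (mkEmb (Hb (fun n : ℕ => decide (n ∈ [3,5]))) (cycleGraph 5) ![0,2,5,7,6]
        (by decide) (fun i j => by revert i j; decide))⟩
  · have hS : {i : Fin 6 | G.Adj y (f i)} = ↑({3} : Finset (Fin 6)) := by
      ext i
      have hi6 : i = 0 ∨ i = 1 ∨ i = 2 ∨ i = 3 ∨ i = 4 ∨ i = 5 := by omega
      rcases hi6 with rfl | rfl | rfl | rfl | rfl | rfl <;>
        simp (config := { decide := true }) [hy0, h1, h2, h3, h4, h5]
    rw [hS, Set.ncard_coe_finset] at h23
    revert h23; decide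
  · exact hHole 5 (by norm_num)
      ⟨Embedding.comp
      (embH G f x y hx hy hxy hx0 hxo (fun n : ℕ => decide (n ∈ [4,5]))
      (by
        intro i
        have hi6 : i = 0 ∨ i = 1 ∨ i = 2 ∨ i = 3 ∨ i = 4 ∨ i = 5 := by omega
        rcases hi6 with rfl | rfl | rfl | rfl | rfl | rfl <;>
          simp (config := { decide := true }) [hy0, h1, h2, h3, h4, h5]))
      (mkEmb (Hb (fun n : ℕ => decide (n ∈ [4,5]))) (cycleGraph 5) ![0,2,5,7,6]
        (by decide) (fun i j => by revert i j; decide))⟩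
  · have hS : {i : Fin 6 | G.Adj y (f i)} = ↑({4} : Finset (Fin 6)) := by
      ext i
      have hi6 : i = 0 ∨ i = 1 ∨ i = 2 ∨ i = 3 ∨ i = 4 ∨ i = 5 := by omega
      rcases hi6 with rfl | rfl | rfl | rfl | rfl | rfl <;>
        simp (config := { decide := true }) [hy0, h1, h2, h3, h4, h5]
    rw [hS, Set.ncard_coe_finset] at h23
    revert h23; decide
  · have hS : {i : Fin 6 | G.Adj y (f i)} = ↑({5} : Finset (Fin 6)) := by
      ext i
      have hi6 : i = 0 ∨ i = 1 ∨ i = 2 ∨ i = 3 ∨ i = 4 ∨ i = 5 := by omega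
      rcases hi6 with rfl | rfl | rfl | rfl | rfl | rfl <;>
        simp (config := { decide := true }) [hy0, h1, h2, h3, h4, h5]
    rw [hS, Set.ncard_coe_finset] at h23
    revert h23; decide
  · have hS : {i : Fin 6 | G.Adj y (f i)} = ↑(∅ : Finset (Fin 6)) := by
      ext i
      have hi6 : i = 0 ∨ i = 1 ∨ i = 2 ∨ i = 3 ∨ i = 4 ∨ i = 5 := by omega
      rcases hi6 with rfl | rfl | rfl | rfl | rfl | rfl <;>
        simp (config := { decide := true }) [hy0, h1, h2, h3, h4, h5]
    rw [hS, Set.ncard_coe_finset] at h23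
    revert h23; decide

/-- rotation automorphism of `(C6)ᶜ`. -/
def rotIso (a : Fin 6) : (cycleGraph 6)ᶜ ≃g (cycleGraph 6)ᶜ where
  toEquiv := Equiv.addRight a
  map_rel_iff' := by
    intro u v
    simp only [Equiv.coe_addRight, compl_adj, cycleGraph_adj', ne_eq]
    constructor
    · rintro ⟨h1, h2⟩
      refine ⟨fun h => h1 (by rw [h]), fun h => h2 ?_⟩
      rwa [add_sub_add_right_eq_sub, add_sub_add_right_eq_sub]
    · rintro ⟨h1, h2⟩
      refine ⟨fun h => h1 (add_right_cancel h), fun h => h2 ?_⟩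
      rwa [add_sub_add_right_eq_sub, add_sub_add_right_eq_sub] at h

/-- for adjacent `x ∈ A₁` and `y ∈ A₂ ∪ A₃`, `N_A(x) ⊆ N_A(y)`. -/
theorem neighborhoods_comparable {V : Type} (G : SimpleGraph V)
    (hHole : HoleFree G) (hPara : ¬ HasInducedCopy G paraglider)
    (f : (cycleGraph 6)ᶜ ↪g G)
    (x y : V) (hx : x ∉ Set.range ⇑f) (hy : y ∉ Set.range ⇑f) (hxy : G.Adj x y)
    (h1 : {i : Fin 6 | G.Adj x (f i)}.ncard = 1)
    (h23 : {i : Fin 6 | G.Adj y (f i)}.ncard = 2 ∨ {i : Fin 6 | G.Adj y (f i)}.ncard = 3) :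
    {i : Fin 6 | G.Adj x (f i)} ⊆ {i : Fin 6 | G.Adj y (f i)} := by
  obtain ⟨a, ha⟩ := Set.ncard_eq_one.mp h1
  intro i hi
  rw [ha] at hi
  have hia : i = a := hi
  subst hia
  show G.Adj y (f i)
  have hxa : G.Adj x (f i) := by
    have : i ∈ {j : Fin 6 | G.Adj x (f j)} := by rw [ha]; rfl
    exact this
  set f' : (cycleGraph 6)ᶜ ↪g G := Embedding.comp f (rotIso i).toEmbedding with hf'
  have key : ∀ j : Fin 6, f' j = f (j + i) := fun j => rfl
  have hrange : Set.range ⇑f' = Set.range ⇑f := by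
    ext v
    constructor
    · rintro ⟨j, rfl⟩; exact ⟨j + i, (key j).symm⟩
    · rintro ⟨j, rfl⟩
      refine ⟨j - i, ?_⟩
      rw [key, sub_add_cancel]
  have hx' : x ∉ Set.range ⇑f' := by rw [hrange]; exact hx
  have hy' : y ∉ Set.range ⇑f' := by rw [hrange]; exact hy
  have hx0' : G.Adj x (f' 0) := by
    show G.Adj x (f (0 + i))
    rw [zero_add]; exact hxa
  have hxo' : ∀ j, G.Adj x (f' j) → j = 0 := by
    intro j hj
    have hj' : G.Adj x (f (j + i)) := hj
    have hmem : j + i ∈ {k : Fin 6 | G.Adj x (f k)} := hj'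
    rw [ha] at hmem
    have hji : j + i = i := hmem
    have := congrArg (· - i) hji
    simpa using this
  have hsets : {k : Fin 6 | G.Adj y (f' k)} = (fun k => k - i) '' {k : Fin 6 | G.Adj y (f k)} := by
    ext k
    constructor
    · intro hk
      have hk' : G.Adj y (f (k + i)) := hk
      exact ⟨k + i, hk', by simp⟩
    · rintro ⟨m, hm, rfl⟩
      show G.Adj y (f (m - i + i))
      rw [sub_add_cancel]
      exact hm
  have hsub : Function.Injective (fun k : Fin 6 => k - i) := by
    intro u v huv
    have := congrArg (· + i) huv
    simpa using this
  have h23' : {k : Fin 6 | G.Adj y (f' k)}.ncard = 2 ∨ {k : Fin 6 | G.Adj y (f' k)}.ncard = 3 := by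
    rw [hsets, Set.ncard_image_of_injective _ hsub]
    exact h23
  have hfin : G.Adj y (f (0 + i)) := aux_adj G hHole hPara f' x y hx' hy' hxy hx0' hxo' h23'
  rwa [zero_add] at hfin
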